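/- arXiv:1912.01093 — 3 statements merged into one kernel-verified Lean document; each statement's English description precedes it below -/
import Mathlib

section
/- Let G be a connected graph of order at least three and let f = (B₀, B₁, B₂) be a total strong Roman dominating function of minimum weight, where B₀, B₁ are the sets of vertices labeled 0 and 1 and B₂ the set of vertices labeled at least 2. Then |B₂| ≤ |B₀|, and moreover no leaf of G lies in B₂ and no support vertex of G lies in B₀. -/
/-!
Every vertex `v` has a neighbour of positive label under any total strong Roman dominating
function (a dominator of `v` if `f v = 0`, a partner in the total condition otherwise). Hence
there are no isolated vertices, the constant function `1` is admissible, and a minimum weight is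
at most `n`. Since vertices of `B₂` weigh at least `2`, `|B₁| + 2|B₂| ≤ n = |B₀| + |B₁| + |B₂|`.
The unique neighbour of a leaf is positive, which excludes support vertices from `B₀`; and a leaf
dominates no vertex of label `0`, so a label `≥ 2` on it could be lowered to `1`.
-/

open Finset

variable {V : Type*} [Fintype V]

/-- The degree of a vertex. -/
noncomputable def degN (G : SimpleGraph V) (v : V) : ℕ := {u | G.Adj v u}.ncard

/-- Maximum degree. -/
noncomputable def maxDeg (G : SimpleGraph V) : ℕ := Finset.univ.sup (degN G)

/-- Minimum degree. -/
noncomputable def minDeg (G : SimpleGraph V) : ℕ := sInf {d | ∃ v, degN G v = d}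

/-- No isolated vertex. -/
def NoIsolated (G : SimpleGraph V) : Prop := ∀ v, ∃ u, G.Adj v u

/-- Total strong Roman dominating function. `(Δ+1)/2 = ⌈Δ/2⌉` and
`(m+1)/2 = ⌈m/2⌉` in natural-number arithmetic. -/
def IsTSRDF (G : SimpleGraph V) (f : V → ℕ) : Prop :=
  (∀ v, f v ≤ (maxDeg G + 1) / 2 + 1) ∧
  (∀ v, f v = 0 → ∃ u, G.Adj v u ∧
      1 + ({w | G.Adj u w ∧ f w = 0}.ncard + 1) / 2 ≤ f u) ∧
  (∀ v, 0 < f v → ∃ u, G.Adj v u ∧ 0 < f u)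

/-- The total strong Roman domination number. -/
noncomputable def tsrd (G : SimpleGraph V) : ℕ :=
  sInf {k | ∃ f : V → ℕ, IsTSRDF G f ∧ ∑ v, f v = k}

lemma eq_of_adj_of_degN_eq_one {G : SimpleGraph V} {x u w : V} (hx : degN G x = 1)
    (hu : G.Adj x u) (hw : G.Adj x w) : u = w :=
  (Set.ncard_le_one_iff).mp hx.le hu hw

lemma card_two_le_le_card_eq_zero (f : V → ℕ) (hsum : ∑ v, f v ≤ Fintype.card V) :
    {v | 2 ≤ f v}.ncard ≤ {v | f v = 0}.ncard := by
  classical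
  simp only [Set.ncard_eq_toFinset_card', Set.toFinset_ofPred, card_filter]
  have hpoint : ∀ v, (if 2 ≤ f v then 1 else 0) + 1 ≤ f v + if f v = 0 then 1 else 0 := by
    intro v; split_ifs <;> omega
  have := sum_le_sum fun v (_ : v ∈ univ) => hpoint v
  rw [sum_add_distrib, sum_add_distrib, sum_const, card_univ, smul_eq_mul, mul_one] at this
  omega

lemma tsrd_le_sum {G : SimpleGraph V} {f : V → ℕ} (hf : IsTSRDF G f) : tsrd G ≤ ∑ v, f v :=
  Nat.sInf_le ⟨f, hf, rfl⟩

namespace IsTSRDF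

variable {G : SimpleGraph V} {f : V → ℕ}

lemma exists_adj_pos (hf : IsTSRDF G f) (v : V) : ∃ u, G.Adj v u ∧ 0 < f u := by
  rcases Nat.eq_zero_or_pos (f v) with hv | hv
  · obtain ⟨u, hvu, hu⟩ := hf.2.1 v hv
    exact ⟨u, hvu, by omega⟩
  · exact hf.2.2 v hv

lemma pos_of_adj_of_degN_eq_one (hf : IsTSRDF G f) {x y : V} (hx : degN G x = 1)
    (hxy : G.Adj x y) : 0 < f y := by
  obtain ⟨u, hxu, hu⟩ := hf.exists_adj_pos x
  rwa [eq_of_adj_of_degN_eq_one hx hxu hxy] at hu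

lemma const_one (hf : IsTSRDF G f) : IsTSRDF G fun _ => 1 := by
  refine ⟨fun _ => Nat.le_add_left 1 _, fun _ h => absurd h one_ne_zero, fun v _ => ?_⟩
  obtain ⟨u, hvu, -⟩ := hf.exists_adj_pos v
  exact ⟨u, hvu, one_pos⟩

lemma tsrd_le_card (hf : IsTSRDF G f) : tsrd G ≤ Fintype.card V := by
  simpa using tsrd_le_sum hf.const_one

/-- A vertex with no neighbour of label `0` dominates nothing and matters only for totality. -/
lemma update_one [DecidableEq V] (hf : IsTSRDF G f) {x : V} (hx : 0 < f x)
    (hnbr : ∀ w, G.Adj x w → 0 < f w) : IsTSRDF G (Function.update f x 1) := by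
  set g := Function.update f x 1
  have hle : g ≤ f := update_le_self_iff.mpr hx
  have hzero : ∀ w, g w = 0 ↔ f w = 0 := by
    intro w
    rcases eq_or_ne w x with rfl | hw
    · simpa only [g, Function.update_self, one_ne_zero, false_iff] using hx.ne'
    · simp only [g, Function.update_of_ne hw]
  have hpos : ∀ w, 0 < g w ↔ 0 < f w := by
    intro w; simpa only [Nat.pos_iff_ne_zero, not_iff_not] using hzero w
  refine ⟨fun v => (hle v).trans (hf.1 v), fun v hv => ?_, fun v hv => ?_⟩
  · obtain ⟨u, hvu, hu⟩ := hf.2.1 v ((hzero v).mp hv)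
    have hux : u ≠ x := by
      rintro rfl
      exact (hnbr v hvu.symm).ne' ((hzero v).mp hv)
    refine ⟨u, hvu, ?_⟩
    simpa only [hzero, g, Function.update_of_ne hux] using hu
  · obtain ⟨u, hvu, hu⟩ := hf.2.2 v ((hpos v).mp hv)
    exact ⟨u, hvu, (hpos u).mpr hu⟩

end IsTSRDF

theorem stmt2_general (G : SimpleGraph V)
    (f : V → ℕ) (hf : IsTSRDF G f) (hmin : ∑ v, f v = tsrd G) :
    {v | 2 ≤ f v}.ncard ≤ {v | f v = 0}.ncard ∧
    (∀ x, degN G x = 1 → f x < 2) ∧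
    (∀ y, (∃ x, G.Adj y x ∧ degN G x = 1) → f y ≠ 0) := by
  classical
  refine ⟨card_two_le_le_card_eq_zero f (hmin ▸ hf.tsrd_le_card), fun x hx => ?_, ?_⟩
  · by_contra! hfx
    have hlower := hf.update_one (by omega) fun w hxw => hf.pos_of_adj_of_degN_eq_one hx hxw
    have hlt : ∑ v, Function.update f x 1 v < ∑ v, f v :=
      Fintype.sum_strictMono (update_lt_self_iff.mpr hfx)
    have := tsrd_le_sum hlower
    omega
  · rintro y ⟨x, hyx, hx⟩
    exact (hf.pos_of_adj_of_degN_eq_one hx hyx.symm).ne'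

theorem stmt2 (G : SimpleGraph V) (hc : G.Connected) (hn : 3 ≤ Fintype.card V)
    (f : V → ℕ) (hf : IsTSRDF G f) (hmin : ∑ v, f v = tsrd G) :
    {v | 2 ≤ f v}.ncard ≤ {v | f v = 0}.ncard ∧
    (∀ x, degN G x = 1 → f x < 2) ∧
    (∀ y, (∃ x, G.Adj y x ∧ degN G x = 1) → f y ≠ 0) :=
  stmt2_general G f hf hmin
end

section
/- For any connected graph G with maximum degree Δ ≤ 3 and no isolated vertex, the total strong Roman domination number equals the total Roman domination number: γ^t_StR(G) = γ_tR(G). -/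
open Finset

variable {V : Type*} [Fintype V]

/-- Total Roman dominating function. -/
def IsTRDF (G : SimpleGraph V) (f : V → ℕ) : Prop :=
  (∀ v, f v ≤ 2) ∧
  (∀ v, f v = 0 → ∃ u, G.Adj v u ∧ f u = 2) ∧
  (∀ v, 0 < f v → ∃ u, G.Adj v u ∧ 0 < f u)

/-- Total Roman domination number. -/
noncomputable def trd (G : SimpleGraph V) : ℕ :=
  sInf {k | ∃ f : V → ℕ, IsTRDF G f ∧ ∑ v, f v = k}

/-!
A total Roman dominating function is already total strong Roman when `Δ ≤ 3`: a vertex `u`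
labelled `2` has a positive neighbour, so at most `deg u - 1 ≤ 2` of its neighbours are labelled
`0`, and `1 + ⌈2/2⌉ = 2`. Conversely, truncating a total strong Roman dominating function at `2`
gives a total Roman one, since a vertex dominating some `0` carries at least `1 + ⌈1/2⌉ = 2`.
Both maps do not increase the weight, so the two minima agree.
-/

section

variable (G : SimpleGraph V)

lemma degN_le_maxDeg (v : V) : degN G v ≤ maxDeg G :=
  Finset.le_sup (Finset.mem_univ v)

lemma one_le_maxDeg (hni : NoIsolated G) (v : V) : 1 ≤ maxDeg G := by
  obtain ⟨u, hu⟩ := hni v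
  have hdeg : 0 < degN G v := (Set.ncard_pos (Set.toFinite _)).mpr ⟨u, hu⟩
  exact hdeg.trans_le (degN_le_maxDeg G v)

lemma ncard_zero_neighbors_lt_degN {f : V → ℕ} {u w : V} (hw : G.Adj u w) (hfw : 0 < f w) :
    {x | G.Adj u x ∧ f x = 0}.ncard < degN G u := by
  refine Set.ncard_lt_ncard ?_ (Set.toFinite _)
  refine ⟨fun x hx => hx.1, fun hsub => ?_⟩
  have : f w = 0 := (hsub hw).2
  omega

omit [Fintype V] in
lemma isTRDF_const_two (hni : NoIsolated G) : IsTRDF G fun _ => 2 :=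
  ⟨fun _ => le_rfl, fun _ h => absurd h two_ne_zero,
    fun v _ => (hni v).imp fun _ hu => ⟨hu, two_pos⟩⟩

lemma IsTRDF.isTSRDF (hni : NoIsolated G) (hΔ : maxDeg G ≤ 3) {f : V → ℕ}
    (hf : IsTRDF G f) : IsTSRDF G f := by
  obtain ⟨hle, hdom, htot⟩ := hf
  refine ⟨fun v => ?_, fun v hv => ?_, htot⟩
  · have := one_le_maxDeg G hni v
    have := hle v
    omega
  · obtain ⟨u, hvu, hu⟩ := hdom v hv
    obtain ⟨w, huw, hw⟩ := htot u (by omega)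
    have hzero := ncard_zero_neighbors_lt_degN G huw hw
    have hdeg := (degN_le_maxDeg G u).trans hΔ
    exact ⟨u, hvu, by omega⟩

lemma IsTSRDF.isTRDF_min_two {g : V → ℕ} (hg : IsTSRDF G g) :
    IsTRDF G fun v => min (g v) 2 := by
  obtain ⟨-, hdom, htot⟩ := hg
  refine ⟨fun v => min_le_right _ _, fun v hv => ?_, fun v hv => ?_⟩
  · have hv0 : g v = 0 := by simp_all
    obtain ⟨u, hvu, hu⟩ := hdom v hv0
    have hzero : 0 < {w | G.Adj u w ∧ g w = 0}.ncard :=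
      (Set.ncard_pos (Set.toFinite _)).mpr ⟨v, hvu.symm, hv0⟩
    exact ⟨u, hvu, show min (g u) 2 = 2 by omega⟩
  · obtain ⟨u, hvu, hu⟩ := htot v (by simp_all)
    exact ⟨u, hvu, by simp [hu]⟩

end

lemma sInf_weight_le_sInf_weight {P Q : (V → ℕ) → Prop} {g₀ : V → ℕ} (hg₀ : P g₀)
    (h : ∀ g, P g → ∃ f, Q f ∧ ∑ v, f v ≤ ∑ v, g v) :
    sInf {k | ∃ f, Q f ∧ ∑ v, f v = k} ≤ sInf {k | ∃ g, P g ∧ ∑ v, g v = k} := by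
  obtain ⟨g, hg, hsum⟩ := Nat.sInf_mem (s := {k | ∃ g, P g ∧ ∑ v, g v = k}) ⟨_, g₀, hg₀, rfl⟩
  obtain ⟨f, hf, hle⟩ := h g hg
  calc sInf {k | ∃ f, Q f ∧ ∑ v, f v = k} ≤ ∑ v, f v := Nat.sInf_le ⟨f, hf, rfl⟩
    _ ≤ _ := hsum ▸ hle

theorem stmt3_general (G : SimpleGraph V) (hni : NoIsolated G)
    (hΔ : maxDeg G ≤ 3) : tsrd G = trd G := by
  unfold tsrd trd
  apply le_antisymm
  · exact sInf_weight_le_sInf_weight (isTRDF_const_two G hni)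
      fun f hf => ⟨f, hf.isTSRDF G hni hΔ, le_rfl⟩
  · exact sInf_weight_le_sInf_weight ((isTRDF_const_two G hni).isTSRDF G hni hΔ)
      fun g hg => ⟨_, hg.isTRDF_min_two G, Finset.sum_le_sum fun v _ => min_le_left _ _⟩

theorem stmt3 (G : SimpleGraph V) (hc : G.Connected) (hni : NoIsolated G)
    (hΔ : maxDeg G ≤ 3) : tsrd G = trd G :=
  stmt3_general G hni hΔ
end

section
/- Let G be a graph of order n with no isolated vertex. Then γ^t_StR(G) = γ_t(G) if and only if G is a disjoint union of copies of K₂. -/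
open Finset

variable {V : Type*} [Fintype V]

/-- Total dominating set. -/
def IsTDS (G : SimpleGraph V) (S : Finset V) : Prop := ∀ v, ∃ u ∈ S, G.Adj v u

/-- Total domination number. -/
noncomputable def td (G : SimpleGraph V) : ℕ :=
  sInf {k | ∃ S : Finset V, IsTDS G S ∧ S.card = k}

/-!
The support of a total strong Roman dominating function `f` is a total dominating set of size
at most `∑ f`, so `γ_t ≤ γ^t_StR`. If equality holds, an optimal `f` is `1` on its support; but a
vertex labelled `0` forces a label `≥ 2` on one of its neighbours, so `f ≡ 1` and `γ_t = n`.
Finally `γ_t = n` means no vertex `x` can be dropped from `V`, i.e. `x` is the sole neighbour of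
some `m x`; then `m` is injective, hence surjective, so no vertex has two neighbours.
Conversely, in a perfect matching every total dominating set is `V`, while `f ≡ 1` has weight `n`.
-/

omit [Fintype V] in
lemma degN_eq_one_iff {G : SimpleGraph V} {v : V} :
    degN G v = 1 ↔ ∃ u, ∀ w, G.Adj v w ↔ w = u := by
  simp [degN, Set.ncard_eq_one, Set.ext_iff]

omit [Fintype V] in
lemma IsTDS.td_le_card {G : SimpleGraph V} {S : Finset V} (hS : IsTDS G S) : td G ≤ #S :=
  Nat.sInf_le ⟨S, hS, rfl⟩

lemma isTDS_univ {G : SimpleGraph V} (hni : NoIsolated G) : IsTDS G univ := fun v ↦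
  let ⟨u, hu⟩ := hni v; ⟨u, mem_univ u, hu⟩

lemma IsTDS.eq_univ_of_degN_eq_one {G : SimpleGraph V} {S : Finset V} (hS : IsTDS G S)
    (h : ∀ v, degN G v = 1) : S = univ := by
  refine eq_univ_iff_forall.mpr fun w ↦ ?_
  obtain ⟨u, hu⟩ := degN_eq_one_iff.mp (h w)
  obtain ⟨w', hw'S, hw'⟩ := hS u
  -- `w` is the only neighbour of its only neighbour `u`
  obtain ⟨x, hx⟩ := degN_eq_one_iff.mp (h u)
  have hwx : w = x := (hx w).mp ((hu u).mpr rfl).symm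
  exact hwx ▸ (hx w').mp hw' ▸ hw'S

lemma card_le_td_of_degN_eq_one {G : SimpleGraph V} (h : ∀ v, degN G v = 1) :
    Fintype.card V ≤ td G := by
  have hni : NoIsolated G := fun v ↦
    let ⟨u, hu⟩ := degN_eq_one_iff.mp (h v); ⟨u, (hu u).mpr rfl⟩
  refine le_csInf ⟨_, univ, isTDS_univ hni, rfl⟩ ?_
  rintro k ⟨S, hS, rfl⟩
  rw [hS.eq_univ_of_degN_eq_one h, card_univ]

lemma exists_forall_adj_exists_adj_ne {G : SimpleGraph V} {v a b : V}
    (ha : G.Adj v a) (hb : G.Adj v b) (hab : a ≠ b) :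
    ∃ x, ∀ w, G.Adj w x → ∃ y, G.Adj w y ∧ y ≠ x := by
  by_contra! hcon
  choose m hm hm_unique using hcon
  have hm_inj : m.Injective := fun x x' h ↦ (hm_unique x x' (h ▸ hm x')).symm
  obtain ⟨x, rfl⟩ := Finite.injective_iff_surjective.mp hm_inj v
  exact hab ((hm_unique x a ha).trans (hm_unique x b hb).symm)

lemma td_lt_card_of_adj_of_adj {G : SimpleGraph V} (hni : NoIsolated G) {v a b : V}
    (ha : G.Adj v a) (hb : G.Adj v b) (hab : a ≠ b) : td G < Fintype.card V := by
  classical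
  obtain ⟨x, hx⟩ := exists_forall_adj_exists_adj_ne ha hb hab
  have hTDS : IsTDS G (univ.erase x) := by
    intro w
    obtain ⟨u, hu⟩ := hni w
    by_cases hux : u = x
    · obtain ⟨y, hy, hyx⟩ := hx w (hux ▸ hu)
      exact ⟨y, mem_erase.mpr ⟨hyx, mem_univ y⟩, hy⟩
    · exact ⟨u, mem_erase.mpr ⟨hux, mem_univ u⟩, hu⟩
  calc td G ≤ #(univ.erase x) := hTDS.td_le_card
    _ < #(univ : Finset V) := card_erase_lt_of_mem (mem_univ x)
    _ = Fintype.card V := card_univ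

lemma degN_eq_one_of_card_le_td {G : SimpleGraph V} (hni : NoIsolated G)
    (h : Fintype.card V ≤ td G) (v : V) : degN G v = 1 := by
  have hpos : 0 < degN G v := (Set.ncard_pos (Set.toFinite _)).mpr (hni v)
  by_contra hv
  obtain ⟨a, b, ha, hb, hab⟩ :=
    (Set.one_lt_ncard_iff (Set.toFinite _)).mp (show 1 < degN G v by omega)
  exact (td_lt_card_of_adj_of_adj hni ha hb hab).not_ge h

lemma isTSRDF_one {G : SimpleGraph V} (hni : NoIsolated G) : IsTSRDF G 1 :=
  ⟨fun _ ↦ le_add_self, fun _ h ↦ absurd h one_ne_zero,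
    fun v _ ↦ let ⟨u, hu⟩ := hni v; ⟨u, hu, one_pos⟩⟩

lemma tsrd_le_card {G : SimpleGraph V} (hni : NoIsolated G) : tsrd G ≤ Fintype.card V :=
  calc tsrd G ≤ ∑ _v : V, 1 := Nat.sInf_le ⟨1, isTSRDF_one hni, rfl⟩
    _ = Fintype.card V := by simp

lemma exists_isTSRDF_sum_eq_tsrd {G : SimpleGraph V} (hni : NoIsolated G) :
    ∃ f, IsTSRDF G f ∧ ∑ v, f v = tsrd G :=
  Nat.sInf_mem (s := {k | ∃ f : V → ℕ, IsTSRDF G f ∧ ∑ v, f v = k})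
    ⟨_, 1, isTSRDF_one hni, rfl⟩

lemma sum_filter_pos_eq_sum (f : V → ℕ) : ∑ v ∈ {v | 0 < f v}, f v = ∑ v, f v :=
  sum_filter_of_ne fun _ _ h ↦ Nat.pos_of_ne_zero h

lemma card_filter_pos_le_sum (f : V → ℕ) : #{v | 0 < f v} ≤ ∑ v, f v := by
  rw [card_eq_sum_ones, ← sum_filter_pos_eq_sum]
  exact sum_le_sum fun v hv ↦ (mem_filter.mp hv).2

namespace IsTSRDF

variable {G : SimpleGraph V} {f : V → ℕ}

lemma isTDS_support (hf : IsTSRDF G f) : IsTDS G {v | 0 < f v} := by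
  intro v
  rcases (f v).eq_zero_or_pos with h0 | hpos
  · obtain ⟨u, hu, hfu⟩ := hf.2.1 v h0
    exact ⟨u, by simp only [mem_filter, mem_univ, true_and]; omega, hu⟩
  · obtain ⟨u, hu, hfu⟩ := hf.2.2 v hpos
    exact ⟨u, by simpa using hfu, hu⟩

lemma exists_two_le (hf : IsTSRDF G f) {v : V} (hv : f v = 0) : ∃ u, 2 ≤ f u := by
  obtain ⟨u, hu, hfu⟩ := hf.2.1 v hv
  -- `v` itself lies in `V₀ ∩ N(u)`, so `⌈|V₀ ∩ N(u)|/2⌉ ≥ 1`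
  have : 0 < {w | G.Adj u w ∧ f w = 0}.ncard :=
    (Set.ncard_pos (Set.toFinite _)).mpr ⟨v, hu.symm, hv⟩
  exact ⟨u, by omega⟩

lemma pos_of_sum_le_card_support (hf : IsTSRDF G f) (h : ∑ v, f v ≤ #{v | 0 < f v})
    (v : V) : 0 < f v := by
  by_contra! hv
  obtain ⟨u, hu⟩ := hf.exists_two_le (Nat.le_zero.mp hv)
  have hlt : #{v | 0 < f v} < ∑ v ∈ {v | 0 < f v}, f v := by
    rw [card_eq_sum_ones]
    exact sum_lt_sum (fun w hw ↦ (mem_filter.mp hw).2)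
      ⟨u, mem_filter.mpr ⟨mem_univ u, by omega⟩, by omega⟩
  rw [sum_filter_pos_eq_sum] at hlt
  omega

end IsTSRDF

lemma td_le_tsrd {G : SimpleGraph V} (hni : NoIsolated G) : td G ≤ tsrd G := by
  refine le_csInf ⟨_, 1, isTSRDF_one hni, rfl⟩ ?_
  rintro k ⟨f, hf, rfl⟩
  exact hf.isTDS_support.td_le_card.trans (card_filter_pos_le_sum f)

theorem stmt11 (G : SimpleGraph V) (hni : NoIsolated G) :
    tsrd G = td G ↔ ∀ v, degN G v = 1 := by
  constructor
  · intro h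
    obtain ⟨f, hf, hsum⟩ := exists_isTSRDF_sum_eq_tsrd hni
    have hle : ∑ v, f v ≤ #{v | 0 < f v} := hsum ▸ h ▸ hf.isTDS_support.td_le_card
    have hpos := hf.pos_of_sum_le_card_support hle
    have hcard : Fintype.card V ≤ td G := by
      rw [← h, ← hsum, Fintype.card_eq_sum_ones]
      exact sum_le_sum fun v _ ↦ hpos v
    exact degN_eq_one_of_card_le_td hni hcard
  · intro h
    exact le_antisymm ((tsrd_le_card hni).trans (card_le_td_of_degN_eq_one h)) (td_le_tsrd hni)
end
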